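/- Let (A, λ) be a finitely additive measure structure on Ω and X : Ω → ℝ with X ≥ 0. If X is λ-measurable, then λ*(X ≥ s + 2η) ≤ λ_*(X > s) + λ*(|X − X_k| ≥ η) + 2^{-k} for suitable approximating simple functions X_k; in particular λ*(X ≥ t) ≤ λ_*(X > s) < ∞ for all 0 < s < t. -/

import Mathlib

/-!
Let `g` be a simple function with `l*(|X - g| ≥ η)` finite, and cover `{|X - g| ≥ η}` by a
ring set `C` of nearly minimal measure. Off `C` the ring set `{g ≥ s + η}` is squeezed between
`{X ≥ s + 2η}` and `{X > s}`, so `l*(X ≥ s + 2η) ≤ l_*(X > s) + l*(|X - g| ≥ η)`. Along an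
approximating sequence the last term tends to `0`, and finiteness of `l*(X ≥ s)` follows from
`{X ≥ s} ⊆ {g ≥ s/2} ∪ {|g - X| > s/2}`.
-/

open scoped ENNReal
open MeasureTheory Filter

namespace FA

variable {Ω : Type*}

/-- Outer measure induced by a finitely additive set function on a ring. -/
noncomputable def outer (𝒜 : Set (Set Ω)) (l : Set Ω → ℝ) (E : Set Ω) : ℝ≥0∞ :=
  ⨅ (A : Set Ω) (_ : A ∈ 𝒜) (_ : E ⊆ A), ENNReal.ofReal (l A)

/-- Inner measure induced by a finitely additive set function on a ring. -/
noncomputable def inner (𝒜 : Set (Set Ω)) (l : Set Ω → ℝ) (E : Set Ω) : ℝ≥0∞ :=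
  ⨆ (B : Set Ω) (_ : B ∈ 𝒜) (_ : B ⊆ E), ENNReal.ofReal (l B)

/-- `f` is an `𝒜`-simple function. -/
def IsSimple (𝒜 : Set (Set Ω)) (f : Ω → ℝ) : Prop :=
  ∃ (s : Finset (Set Ω)) (c : Set Ω → ℝ), (∀ A ∈ s, A ∈ 𝒜) ∧
    ∀ ω, f ω = ∑ A ∈ s, c A * (A.indicator (fun _ => (1 : ℝ)) ω)

/-- `I` is the elementary integral of the `𝒜`-simple function `f` with respect to `l`. -/
def SimpleIntegralEq (𝒜 : Set (Set Ω)) (l : Set Ω → ℝ) (f : Ω → ℝ) (I : ℝ) : Prop :=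
  ∃ (s : Finset (Set Ω)) (c : Set Ω → ℝ), (∀ A ∈ s, A ∈ 𝒜) ∧
    (∀ ω, f ω = ∑ A ∈ s, c A * (A.indicator (fun _ => (1 : ℝ)) ω)) ∧
    I = ∑ A ∈ s, c A * l A

/-- `f n` converges to `g` in `l`-measure. -/
def ConvInMeasure (𝒜 : Set (Set Ω)) (l : Set Ω → ℝ) (f : ℕ → Ω → ℝ) (g : Ω → ℝ) : Prop :=
  ∀ c : ℝ, 0 < c →
    Tendsto (fun n => outer 𝒜 l {ω | c < |f n ω - g ω|}) atTop (nhds 0)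

/-- The sequence `f` is Cauchy in the `L¹(l)` seminorm. -/
def CauchyL1 (𝒜 : Set (Set Ω)) (l : Set Ω → ℝ) (f : ℕ → Ω → ℝ) : Prop :=
  ∀ ε : ℝ, 0 < ε → ∃ N : ℕ, ∀ m ≥ N, ∀ n ≥ N,
    ∃ I : ℝ, SimpleIntegralEq 𝒜 l (fun ω => |f m ω - f n ω|) I ∧ I < ε

/-- `f` is integrable in the finitely additive (Dunford–Schwartz) sense with integral `I`. -/
def HasIntegral (𝒜 : Set (Set Ω)) (l : Set Ω → ℝ) (f : Ω → ℝ) (I : ℝ) : Prop :=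
  ∃ (g : ℕ → Ω → ℝ) (J : ℕ → ℝ), (∀ n, IsSimple 𝒜 (g n)) ∧
    ConvInMeasure 𝒜 l g f ∧ CauchyL1 𝒜 l g ∧
    (∀ n, SimpleIntegralEq 𝒜 l (g n) (J n)) ∧ Tendsto J atTop (nhds I)

/-- `f ∈ L¹(l)`. -/
def MemL1 (𝒜 : Set (Set Ω)) (l : Set Ω → ℝ) (f : Ω → ℝ) : Prop :=
  ∃ I : ℝ, HasIntegral 𝒜 l f I

/-- `f` is `l`-measurable: an `l`-limit in measure of `𝒜`-simple functions. -/
def FAMeasurable (𝒜 : Set (Set Ω)) (l : Set Ω → ℝ) (f : Ω → ℝ) : Prop :=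
  ∃ g : ℕ → Ω → ℝ, (∀ n, IsSimple 𝒜 (g n)) ∧ ConvInMeasure 𝒜 l g f

/-- `(𝒜, l)` is a finitely additive measure structure on `Ω`. -/
def FAMeasure (𝒜 : Set (Set Ω)) (l : Set Ω → ℝ) : Prop :=
  MeasureTheory.IsSetRing 𝒜 ∧ (∀ A ∈ 𝒜, 0 ≤ l A) ∧ l ∅ = 0 ∧
    ∀ A ∈ 𝒜, ∀ B ∈ 𝒜, Disjoint A B → l (A ∪ B) = l A + l B

/-- The ring `𝒜(l)` of sets whose inner and outer measures agree and are finite. -/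
def AgreeRing (𝒜 : Set (Set Ω)) (l : Set Ω → ℝ) : Set (Set Ω) :=
  {E : Set Ω | outer 𝒜 l E = inner 𝒜 l E ∧ outer 𝒜 l E < ⊤}

variable {𝒜 : Set (Set Ω)} {l : Set Ω → ℝ}

namespace FAMeasure

lemma mono (hl : FAMeasure 𝒜 l) {A B : Set Ω} (hA : A ∈ 𝒜) (hB : B ∈ 𝒜) (h : A ⊆ B) :
    l A ≤ l B := by
  have hBA : B \ A ∈ 𝒜 := hl.1.sdiff_mem hB hA
  have := hl.2.2.2 A hA _ hBA disjoint_sdiff_self_right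
  rw [Set.union_sdiff_cancel h] at this
  linarith [hl.2.1 _ hBA]

lemma union_le (hl : FAMeasure 𝒜 l) {A B : Set Ω} (hA : A ∈ 𝒜) (hB : B ∈ 𝒜) :
    l (A ∪ B) ≤ l A + l B := by
  have hBA : B \ A ∈ 𝒜 := hl.1.sdiff_mem hB hA
  have := hl.2.2.2 A hA _ hBA disjoint_sdiff_self_right
  rw [Set.union_sdiff_self] at this
  linarith [hl.mono hBA hB Set.sdiff_subset]

end FAMeasure

lemma outer_mono {E F : Set Ω} (h : E ⊆ F) : outer 𝒜 l E ≤ outer 𝒜 l F :=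
  le_iInf₂ fun A hA => le_iInf fun hF => iInf₂_le_of_le A hA (iInf_le _ (h.trans hF))

lemma outer_le_ofReal {A E : Set Ω} (hA : A ∈ 𝒜) (h : E ⊆ A) :
    outer 𝒜 l E ≤ ENNReal.ofReal (l A) :=
  iInf₂_le_of_le A hA (iInf_le _ h)

lemma ofReal_le_inner {B E : Set Ω} (hB : B ∈ 𝒜) (h : B ⊆ E) :
    ENNReal.ofReal (l B) ≤ inner 𝒜 l E :=
  le_iSup₂_of_le B hB (le_iSup_of_le h le_rfl)

lemma inner_le_outer (hl : FAMeasure 𝒜 l) {E F : Set Ω} (h : E ⊆ F) :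
    inner 𝒜 l E ≤ outer 𝒜 l F :=
  iSup₂_le fun _ hB => iSup_le fun hBE => le_iInf₂ fun _ hA => le_iInf fun hFA =>
    ENNReal.ofReal_le_ofReal (hl.mono hB hA ((hBE.trans h).trans hFA))

lemma exists_mem_superset_ofReal_le_outer_add {E : Set Ω} (hE : outer 𝒜 l E ≠ ⊤)
    {ε : ℝ} (hε : 0 < ε) :
    ∃ A ∈ 𝒜, E ⊆ A ∧ ENNReal.ofReal (l A) ≤ outer 𝒜 l E + ENNReal.ofReal ε := by
  have hlt : outer 𝒜 l E < outer 𝒜 l E + ENNReal.ofReal ε :=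
    ENNReal.lt_add_right hE (ENNReal.ofReal_pos.mpr hε).ne'
  simp only [outer, iInf_lt_iff] at hlt
  obtain ⟨A, hA, hEA, hlA⟩ := hlt
  exact ⟨A, hA, hEA, hlA.le⟩

lemma outer_le_ofReal_add_outer (hl : FAMeasure 𝒜 l) {A E F : Set Ω} (hA : A ∈ 𝒜)
    (h : E ⊆ A ∪ F) : outer 𝒜 l E ≤ ENNReal.ofReal (l A) + outer 𝒜 l F := by
  by_cases hF : outer 𝒜 l F = ⊤
  · simp [hF]
  refine ENNReal.le_of_forall_pos_le_add fun ε hε _ => ?_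
  obtain ⟨C, hC, hFC, hlC⟩ :=
    exists_mem_superset_ofReal_le_outer_add hF (NNReal.coe_pos.mpr hε)
  calc outer 𝒜 l E ≤ ENNReal.ofReal (l (A ∪ C)) :=
        outer_le_ofReal (hl.1.union_mem hA hC) (h.trans (Set.union_subset_union_right A hFC))
    _ ≤ ENNReal.ofReal (l A) + ENNReal.ofReal (l C) :=
        (ENNReal.ofReal_le_ofReal (hl.union_le hA hC)).trans ENNReal.ofReal_add_le
    _ ≤ ENNReal.ofReal (l A) + (outer 𝒜 l F + ENNReal.ofReal ε) := by gcongr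
    _ = ENNReal.ofReal (l A) + outer 𝒜 l F + ε := by
        rw [ENNReal.ofReal_coe_nnreal, add_assoc]

lemma setOf_forall_mem_iff_mem_mem (hR : IsSetRing 𝒜) {s T : Finset (Set Ω)}
    (hs : ∀ A ∈ s, A ∈ 𝒜) (hTs : T ⊆ s) (hT : T.Nonempty) :
    {ω | ∀ A ∈ s, ω ∈ A ↔ A ∈ T} ∈ 𝒜 := by
  have : {ω | ∀ A ∈ s, ω ∈ A ↔ A ∈ T} = (⋂ A ∈ T, A) \ ⋃ A ∈ s \ T, A := by
    ext ω
    simp only [Set.mem_ofPred_eq, Set.mem_sdiff, Set.mem_iInter, Set.mem_iUnion,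
      Finset.mem_sdiff, not_exists]
    constructor
    · intro h
      exact ⟨fun A hA => (h A (hTs hA)).2 hA, fun A hA hωA => hA.2 ((h A hA.1).1 hωA)⟩
    · rintro ⟨hin, hout⟩ A hA
      exact ⟨fun hωA => by_contra fun hAT => hout A ⟨hA, hAT⟩ hωA, hin A⟩
  rw [this]
  exact hR.sdiff_mem (hR.biInter_mem T hT fun A hA => hs A (hTs hA))
    (hR.biUnion_mem _ fun A hA => hs A (Finset.mem_sdiff.mp hA).1)

/- `{r ≤ f}` is the union of the atoms of `s` whose coefficient sum is at least `r`; `0 < r`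
excludes the atom lying outside every set of `s`, which need not belong to the ring. -/
lemma IsSimple.setOf_le_mem (hl : FAMeasure 𝒜 l) {f : Ω → ℝ} (hf : IsSimple 𝒜 f) {r : ℝ}
    (hr : 0 < r) : {ω | r ≤ f ω} ∈ 𝒜 := by
  classical
  obtain ⟨s, c, hs, hf⟩ := hf
  have hf_eq {ω : Ω} {T : Finset (Set Ω)} (hTs : T ⊆ s) (hω : ∀ A ∈ s, ω ∈ A ↔ A ∈ T) :
      f ω = ∑ A ∈ T, c A := by
    rw [hf ω, ← Finset.sum_subset hTs fun A hA hAT => by simp [(hω A hA).not.2 hAT]]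
    exact Finset.sum_congr rfl fun A hA => by simp [(hω A (hTs hA)).2 hA]
  have : {ω | r ≤ f ω} =
      ⋃ T ∈ s.powerset.filter (r ≤ ∑ A ∈ ·, c A), {ω | ∀ A ∈ s, ω ∈ A ↔ A ∈ T} := by
    ext ω
    simp only [Set.mem_ofPred_eq, Set.mem_iUnion, Finset.mem_filter, Finset.mem_powerset,
      exists_prop]
    constructor
    · intro hω
      have hpat : ∀ A ∈ s, ω ∈ A ↔ A ∈ s.filter (ω ∈ ·) := by simp +contextual
      exact ⟨_, ⟨Finset.filter_subset _ _, hf_eq (Finset.filter_subset _ _) hpat ▸ hω⟩, hpat⟩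
    · rintro ⟨T, ⟨hTs, hrT⟩, hω⟩
      exact (hf_eq hTs hω).symm ▸ hrT
  rw [this]
  refine hl.1.biUnion_mem _ fun T hT => ?_
  obtain ⟨hTs, hrT⟩ := Finset.mem_filter.mp hT
  refine setOf_forall_mem_iff_mem_mem hl.1 hs (Finset.mem_powerset.mp hTs) ?_
  by_contra hT
  simp only [Finset.not_nonempty_iff_eq_empty.mp hT, Finset.sum_empty] at hrT
  exact hrT.not_gt hr

lemma outer_setOf_add_two_mul_le_le_inner_add_outer (hl : FAMeasure 𝒜 l) {X g : Ω → ℝ}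
    (hg : IsSimple 𝒜 g) {s η : ℝ} (hsη : 0 < s + η) :
    outer 𝒜 l {ω | s + 2 * η ≤ X ω} ≤
      inner 𝒜 l {ω | s < X ω} + outer 𝒜 l {ω | η ≤ |X ω - g ω|} := by
  set O := outer 𝒜 l {ω | η ≤ |X ω - g ω|}
  by_cases hO : O = ⊤
  · simp [hO]
  refine ENNReal.le_of_forall_pos_le_add fun ε hε _ => ?_
  obtain ⟨C, hC, hCO, hlC⟩ :=
    exists_mem_superset_ofReal_le_outer_add hO (NNReal.coe_pos.mpr hε)
  have hclose {ω} (hω : ω ∉ C) : |X ω - g ω| < η := not_le.mp fun h => hω (hCO h)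
  set A := {ω | s + η ≤ g ω}
  have hA : A \ C ∈ 𝒜 := hl.1.sdiff_mem (hg.setOf_le_mem hl hsη) hC
  have hAX : A \ C ⊆ {ω | s < X ω} := fun ω ⟨hωA, hωC⟩ => show s < X ω by
    linarith [(abs_lt.mp (hclose hωC)).1, show s + η ≤ g ω from hωA]
  have hXA : {ω | s + 2 * η ≤ X ω} ⊆ A \ C ∪ C := fun ω (hω : s + 2 * η ≤ X ω) => by
    by_cases hωC : ω ∈ C
    · exact .inr hωC
    · exact .inl ⟨show s + η ≤ g ω by linarith [(abs_lt.mp (hclose hωC)).2], hωC⟩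
  calc outer 𝒜 l {ω | s + 2 * η ≤ X ω}
      ≤ ENNReal.ofReal (l (A \ C ∪ C)) := outer_le_ofReal (hl.1.union_mem hA hC) hXA
    _ = ENNReal.ofReal (l (A \ C)) + ENNReal.ofReal (l C) := by
        rw [hl.2.2.2 _ hA _ hC disjoint_sdiff_self_left,
          ENNReal.ofReal_add (hl.2.1 _ hA) (hl.2.1 _ hC)]
    _ ≤ inner 𝒜 l {ω | s < X ω} + (O + ENNReal.ofReal ε) :=
        add_le_add (ofReal_le_inner hA hAX) hlC
    _ = inner 𝒜 l {ω | s < X ω} + O + ε := by rw [ENNReal.ofReal_coe_nnreal, add_assoc]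

lemma ConvInMeasure.tendsto_outer_le_abs_sub {g : ℕ → Ω → ℝ} {X : Ω → ℝ}
    (hg : ConvInMeasure 𝒜 l g X) {η : ℝ} (hη : 0 < η) :
    Tendsto (fun k => outer 𝒜 l {ω | η ≤ |X ω - g k ω|}) atTop (nhds 0) :=
  tendsto_of_tendsto_of_tendsto_of_le_of_le tendsto_const_nhds (hg (η / 2) (by linarith))
    (fun _ => zero_le) fun k => outer_mono fun ω (hω : η ≤ |X ω - g k ω|) => by
      change η / 2 < |g k ω - X ω|
      rw [abs_sub_comm]
      linarith

lemma ConvInMeasure.outer_setOf_le_lt_top (hl : FAMeasure 𝒜 l) {g : ℕ → Ω → ℝ}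
    {X : Ω → ℝ} (hgs : ∀ k, IsSimple 𝒜 (g k)) (hg : ConvInMeasure 𝒜 l g X) {s : ℝ}
    (hs : 0 < s) : outer 𝒜 l {ω | s ≤ X ω} < ⊤ := by
  obtain ⟨k, hk⟩ := ((hg (s / 2) (half_pos hs)).eventually
    (gt_mem_nhds ENNReal.zero_lt_top)).exists
  have hcov : {ω | s ≤ X ω} ⊆ {ω | s / 2 ≤ g k ω} ∪ {ω | s / 2 < |g k ω - X ω|} :=
    fun ω (hω : s ≤ X ω) => by
      by_cases h : s / 2 < |g k ω - X ω|
      · exact .inr h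
      · exact .inl (show s / 2 ≤ g k ω by linarith [(abs_le.mp (not_lt.mp h)).1])
  exact (outer_le_ofReal_add_outer hl ((hgs k).setOf_le_mem hl (half_pos hs)) hcov).trans_lt
    (ENNReal.add_lt_top.mpr ⟨ENNReal.ofReal_lt_top, hk⟩)

lemma ConvInMeasure.outer_setOf_le_le_inner (hl : FAMeasure 𝒜 l) {g : ℕ → Ω → ℝ}
    {X : Ω → ℝ} (hgs : ∀ k, IsSimple 𝒜 (g k)) (hg : ConvInMeasure 𝒜 l g X) {s t : ℝ}
    (hs : 0 < s) (hst : s < t) : outer 𝒜 l {ω | t ≤ X ω} ≤ inner 𝒜 l {ω | s < X ω} := by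
  have hη : 0 < (t - s) / 2 := by linarith
  have hbound (k : ℕ) : outer 𝒜 l {ω | t ≤ X ω} ≤
      inner 𝒜 l {ω | s < X ω} + outer 𝒜 l {ω | (t - s) / 2 ≤ |X ω - g k ω|} := by
    have := outer_setOf_add_two_mul_le_le_inner_add_outer (X := X) (s := s) (η := (t - s) / 2)
      hl (hgs k) (by linarith)
    rwa [show s + 2 * ((t - s) / 2) = t by ring] at this
  simpa using ge_of_tendsto
    (tendsto_const_nhds.add (hg.tendsto_outer_le_abs_sub hη)) (Eventually.of_forall hbound)

end FA

open FA MeasureTheory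

theorem stmt1_general {Ω : Type*} (𝒜 : Set (Set Ω)) (l : Set Ω → ℝ)
    (hl : FAMeasure 𝒜 l) (X : Ω → ℝ)
    (hmeas : FAMeasurable 𝒜 l X) :
    (∃ g : ℕ → Ω → ℝ, (∀ k, IsSimple 𝒜 (g k)) ∧ ConvInMeasure 𝒜 l g X ∧
      ∀ s η : ℝ, 0 < s → 0 < η → ∀ k : ℕ,
        outer 𝒜 l {ω | s + 2 * η ≤ X ω} ≤
          inner 𝒜 l {ω | s < X ω} + outer 𝒜 l {ω | η ≤ |X ω - g k ω|}
            + ENNReal.ofReal ((2 : ℝ) ^ (-(k : ℤ)))) ∧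
    ∀ s t : ℝ, 0 < s → s < t →
      outer 𝒜 l {ω | t ≤ X ω} ≤ inner 𝒜 l {ω | s < X ω} ∧
      inner 𝒜 l {ω | s < X ω} < ⊤ := by
  obtain ⟨g, hgs, hg⟩ := hmeas
  refine ⟨⟨g, hgs, hg, fun s η hs hη k => ?_⟩, fun s t hs hst =>
    ⟨hg.outer_setOf_le_le_inner hl hgs hs hst, ?_⟩⟩
  · exact (outer_setOf_add_two_mul_le_le_inner_add_outer hl (hgs k) (by linarith)).trans
      le_self_add
  · exact (inner_le_outer hl fun ω (h : s < X ω) => h.le).trans_lt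
      (hg.outer_setOf_le_lt_top hl hgs hs)

/-- if `X ≥ 0` is `l`-measurable then, for a suitable approximating sequence
of simple functions `g k`, `l*(X ≥ s + 2η) ≤ l_*(X > s) + l*(|X - g k| ≥ η) + 2⁻ᵏ`;
in particular `l*(X ≥ t) ≤ l_*(X > s) < ∞` for all `0 < s < t`. -/
theorem stmt1 {Ω : Type*} (𝒜 : Set (Set Ω)) (l : Set Ω → ℝ)
    (hl : FAMeasure 𝒜 l) (X : Ω → ℝ) (hX : ∀ ω, 0 ≤ X ω)
    (hmeas : FAMeasurable 𝒜 l X) :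
    (∃ g : ℕ → Ω → ℝ, (∀ k, IsSimple 𝒜 (g k)) ∧ ConvInMeasure 𝒜 l g X ∧
      ∀ s η : ℝ, 0 < s → 0 < η → ∀ k : ℕ,
        outer 𝒜 l {ω | s + 2 * η ≤ X ω} ≤
          inner 𝒜 l {ω | s < X ω} + outer 𝒜 l {ω | η ≤ |X ω - g k ω|}
            + ENNReal.ofReal ((2 : ℝ) ^ (-(k : ℤ)))) ∧
    ∀ s t : ℝ, 0 < s → s < t →
      outer 𝒜 l {ω | t ≤ X ω} ≤ inner 𝒜 l {ω | s < X ω} ∧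
      inner 𝒜 l {ω | s < X ω} < ⊤ :=
  stmt1_general 𝒜 l hl X hmeas
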